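/- arXiv:1401.0407 — 3 statements merged into one kernel-verified Lean document; each statement's English description precedes it below -/
import Mathlib

section
/- Let N ≥ 2, let r₁, …, r_N be positive reals, and let a₁, …, a_N be reals with 0 ≤ a_j ≤ r_j for every j. Then Σ_{j=1}^{N−1} a_j · Σ_{k=j+1}^{N} a_k² / (r_j + r_{j+1} + … + r_k)² ≤ Σ_{j=1}^{N} a_j. -/
/-!
Exchanging the order of summation, the left side becomes
`Σ_k a_k² Σ_{j<k} a_j / S(j,k)²` with `S(j,k) = r_j + … + r_k`. Since `a_j ≤ r_j` and
`S(j,k) = r_j + S(j+1,k)`, each term is at most `1/S(j+1,k) - 1/S(j,k)`, so the inner sum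
telescopes to at most `1/r_k`; finally `a_k² / r_k ≤ a_k` because `0 ≤ a_k ≤ r_k`.
-/

open Finset

lemma div_add_sq_le_inv_sub_inv {a x s : ℝ} (hx : 0 < x) (hs : 0 < s) (hax : a ≤ x) :
    a / (x + s) ^ 2 ≤ s⁻¹ - (x + s)⁻¹ := by
  have hinv : s⁻¹ - (x + s)⁻¹ = x / ((x + s) * s) := by
    field_simp
    ring
  rw [hinv, sq]
  exact div_le_div₀ hx.le hax (by positivity) (by gcongr; linarith)

lemma sum_Ico_div_sq_sum_Icc_le (r a : ℕ → ℝ) {m k : ℕ} (hmk : m ≤ k)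
    (hr : ∀ i ∈ Icc m k, 0 < r i) (har : ∀ j ∈ Ico m k, a j ≤ r j) :
    ∑ j ∈ Ico m k, a j / (∑ i ∈ Icc j k, r i) ^ 2 ≤
      (r k)⁻¹ - (∑ i ∈ Icc m k, r i)⁻¹ := by
  have htel := sum_Ico_sub (fun j => (∑ i ∈ Icc j k, r i)⁻¹) hmk
  rw [Icc_self, sum_singleton] at htel
  rw [← htel]
  refine sum_le_sum fun j hj => ?_
  obtain ⟨hmj, hjk⟩ := mem_Ico.mp hj
  have hpos : 0 < ∑ i ∈ Icc (j + 1) k, r i :=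
    sum_pos (fun i hi => hr i (Icc_subset_Icc (by omega) le_rfl hi)) (nonempty_Icc.mpr hjk)
  rw [← add_sum_Ioc_eq_sum_Icc hjk.le, ← Icc_add_one_left_eq_Ioc]
  exact div_add_sq_le_inv_sub_inv (hr j (mem_Icc.mpr ⟨hmj, hjk.le⟩)) hpos (har j hj)

lemma sq_mul_le_self_of_le_inv {a r t : ℝ} (ha : 0 ≤ a) (har : a ≤ r) (ht : t ≤ r⁻¹) :
    a ^ 2 * t ≤ a :=
  calc a ^ 2 * t ≤ a ^ 2 * r⁻¹ := by gcongr
    _ = a * (a / r) := by ring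
    _ ≤ a * 1 := by gcongr; exact div_le_one_of_le₀ har (ha.trans har)
    _ = a := mul_one a

theorem marcinkiewicz_double_sum_general (N : ℕ) (r a : ℕ → ℝ)
    (hr : ∀ j, 1 ≤ j → j ≤ N → 0 < r j)
    (ha₀ : ∀ j, 1 ≤ j → j ≤ N → 0 ≤ a j)
    (har : ∀ j, 1 ≤ j → j ≤ N → a j ≤ r j) :
    ∑ j ∈ Finset.Icc 1 (N - 1), a j *
        ∑ k ∈ Finset.Icc (j + 1) N, (a k) ^ 2 / (∑ i ∈ Finset.Icc j k, r i) ^ 2 ≤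
      ∑ j ∈ Finset.Icc 1 N, a j := by
  have hswap : ∑ j ∈ Icc 1 (N - 1), a j *
        ∑ k ∈ Icc (j + 1) N, a k ^ 2 / (∑ i ∈ Icc j k, r i) ^ 2 =
      ∑ k ∈ Icc 1 N, a k ^ 2 * ∑ j ∈ Ico 1 k, a j / (∑ i ∈ Icc j k, r i) ^ 2 := by
    simp only [mul_sum, mul_div_left_comm (a _)]
    exact sum_comm' fun j k => by simp only [mem_Icc, mem_Ico]; omega
  rw [hswap]
  refine sum_le_sum fun k hk => ?_
  obtain ⟨h1k, hkN⟩ := mem_Icc.mp hk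
  refine sq_mul_le_self_of_le_inv (ha₀ k h1k hkN) (har k h1k hkN) ?_
  have hr_k : ∀ i ∈ Icc 1 k, 0 < r i := fun i hi =>
    hr i (mem_Icc.mp hi).1 ((mem_Icc.mp hi).2.trans hkN)
  have htel := sum_Ico_div_sq_sum_Icc_le r a h1k hr_k
    (fun j hj => har j (mem_Ico.mp hj).1 ((mem_Ico.mp hj).2.le.trans hkN))
  have hnonneg : 0 ≤ (∑ i ∈ Icc 1 k, r i)⁻¹ :=
    inv_nonneg.mpr (sum_nonneg fun i hi => (hr_k i hi).le)
  linarith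

/-- **Inequality (6.4) of Eiderman–Reznikov–Volberg.** If `N ≥ 2`, `r₁, …, r_N > 0` and
`0 ≤ a_j ≤ r_j`, then
`Σ_{j=1}^{N−1} a_j · Σ_{k=j+1}^{N} a_k² / (r_j + … + r_k)² ≤ Σ_{j=1}^{N} a_j`. -/
theorem marcinkiewicz_double_sum (N : ℕ) (hN : 2 ≤ N) (r a : ℕ → ℝ)
    (hr : ∀ j, 1 ≤ j → j ≤ N → 0 < r j)
    (ha₀ : ∀ j, 1 ≤ j → j ≤ N → 0 ≤ a j)
    (har : ∀ j, 1 ≤ j → j ≤ N → a j ≤ r j) :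
    ∑ j ∈ Finset.Icc 1 (N - 1), a j *
        ∑ k ∈ Finset.Icc (j + 1) N, (a k) ^ 2 / (∑ i ∈ Finset.Icc j k, r i) ^ 2 ≤
      ∑ j ∈ Finset.Icc 1 N, a j :=
  marcinkiewicz_double_sum_general N r a hr ha₀ har
end

section
/- Let λ > 1 and λ′ = (1+λ)/2. Let D_i = D(x_i, r_i) be a finite or countable family of λ-separated discs, each of which has non-empty intersection with the real line ℝ ⊂ ℂ, and set Q_i = λ′D_i = D(x_i, λ′·r_i). Then there exists a constant A₁ = A₁(λ), depending only on λ, such that for every index j, Σ_{i ≠ j} r_i / dist(Q_i, Q_j)² ≤ A₁ / r_j, where dist(Q_i, Q_j) denotes the Euclidean distance between the sets Q_i and Q_j. -/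
open Metric Set

/-- The (infimal) distance between two subsets of `ℂ`. -/
noncomputable def setDist (s t : Set ℂ) : ℝ := sInf (Set.image2 dist s t)

/-!
Each disc `D_i` contains a real point `p_i`, and the intervals `(p_i - ρ_i, p_i + ρ_i)` with
`ρ_i = (λ - 1) r_i` lie in `λD_i`, hence are pairwise disjoint. The distance `dist(Q_i, Q_j)` is
comparable to `|p_i - p_j|`, and `ρ_i / (p_i - p_j)²` is dominated by `∫ dt / t²` over the interval
around `p_i`, seen from `p_j`. On each side of `p_j` these intervals are disjoint and lie at
distance at least `ρ_j` from `p_j`, so each side contributes at most `∫_{ρ_j}^∞ dt / t² = 1 / ρ_j`.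
-/

theorem sum_inv_sub_inv_le_of_pairwise_disjoint {ι : Type*} (s : Finset ι)
    {a b : ι → ℝ} (hab : ∀ i ∈ s, a i < b i)
    (hdisj : (s : Set ι).Pairwise fun i k => b i ≤ a k ∨ b k ≤ a i) :
    ∀ {L : ℝ}, 0 < L → (∀ i ∈ s, L ≤ a i) → ∑ i ∈ s, ((a i)⁻¹ - (b i)⁻¹) ≤ L⁻¹ := by
  classical
  induction s using Finset.induction_on_min_value a with
  | empty => intro L hL _; simpa using hL.le
  | insert i₀ s hi₀ hmin ih =>
    intro L hL hLa
    have hL₀ : L ≤ a i₀ := hLa i₀ (Finset.mem_insert_self _ _)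
    have hab₀ : a i₀ < b i₀ := hab i₀ (Finset.mem_insert_self _ _)
    -- `i₀` has the leftmost interval, so the others lie to the right of `b i₀`
    have hright : ∀ k ∈ s, b i₀ ≤ a k := fun k hk => by
      have hne : i₀ ≠ k := fun h => hi₀ (h ▸ hk)
      rcases hdisj (by simp) (by simp [hk]) hne with h | h
      · exact h
      · linarith [hmin k hk, hab k (Finset.mem_insert_of_mem hk)]
    have hrest := ih (fun k hk => hab k (Finset.mem_insert_of_mem hk))
      (hdisj.mono (by simp)) ((hL.trans_le hL₀).trans hab₀) hright
    rw [Finset.sum_insert hi₀]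
    have : (a i₀)⁻¹ ≤ L⁻¹ := inv_anti₀ hL hL₀
    linarith

theorem div_sq_le_inv_sub_inv {u ρ : ℝ} (hρ : 0 < ρ) (hρu : ρ < u) :
    ρ / u ^ 2 ≤ (u - ρ)⁻¹ - (u + ρ)⁻¹ := by
  have hu : 0 < u := hρ.trans hρu
  rw [inv_sub_inv (by linarith) (by linarith), div_le_div_iff₀ (by positivity)
    (by nlinarith)]
  nlinarith [mul_pos hρ (mul_pos hρ hρ), mul_pos hρ (mul_pos hu hu)]

theorem sum_div_sq_le_of_separated {ι : Type*} (s : Finset ι) {u ρ : ι → ℝ}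
    {R : ℝ} (hR : 0 < R) (hρ : ∀ i ∈ s, 0 < ρ i) (hu : ∀ i ∈ s, R + ρ i ≤ u i)
    (hsep : (s : Set ι).Pairwise fun i k => ρ i + ρ k ≤ |u i - u k|) :
    ∑ i ∈ s, ρ i / u i ^ 2 ≤ R⁻¹ := by
  refine (Finset.sum_le_sum fun i hi => div_sq_le_inv_sub_inv (hρ i hi) ?_).trans
    (sum_inv_sub_inv_le_of_pairwise_disjoint s (fun i hi => ?_) (fun i hi k hk hik => ?_) hR
      fun i hi => ?_)
  · linarith [hu i hi]
  · linarith [hρ i hi]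
  · rcases le_abs.1 (hsep hi hk hik) with h | h
    · right; linarith
    · left; linarith
  · linarith [hu i hi]

theorem sum_div_sq_sub_le_of_separated {ι : Type*} (s : Finset ι) {j : ι}
    (hj : j ∉ s) {p ρ : ι → ℝ} (hρ : ∀ i, 0 < ρ i)
    (hsep : Pairwise fun i k => ρ i + ρ k ≤ |p i - p k|) :
    ∑ i ∈ s, ρ i / (p i - p j) ^ 2 ≤ 2 / ρ j := by
  have hne : ∀ i ∈ s, i ≠ j := fun i hi h => hj (h ▸ hi)
  have hright : ∑ i ∈ s with p j < p i, ρ i / (p i - p j) ^ 2 ≤ (ρ j)⁻¹ := by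
    refine sum_div_sq_le_of_separated _ (hρ j) (fun i _ => hρ i) (fun i hi => ?_)
      (fun i _ k _ hik => by simpa using hsep hik)
    rw [Finset.mem_filter] at hi
    have : ρ i + ρ j ≤ |p i - p j| := hsep (hne i hi.1)
    rw [abs_of_pos (sub_pos.2 hi.2)] at this
    linarith
  have hleft : ∑ i ∈ s with ¬p j < p i, ρ i / (p j - p i) ^ 2 ≤ (ρ j)⁻¹ := by
    refine sum_div_sq_le_of_separated _ (hρ j) (fun i _ => hρ i) (fun i hi => ?_)
      (fun i _ k _ hik => by simpa [abs_sub_comm] using hsep hik)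
    rw [Finset.mem_filter] at hi
    have : ρ i + ρ j ≤ |p i - p j| := hsep (hne i hi.1)
    rw [abs_of_nonpos (sub_nonpos.2 (not_lt.1 hi.2))] at this
    linarith
  rw [← Finset.sum_filter_add_sum_filter_not s (fun i => p j < p i)]
  simp_rw [sub_sq_comm (p j)] at hleft
  linarith [show (2 : ℝ) / ρ j = (ρ j)⁻¹ + (ρ j)⁻¹ by ring]

theorem sum_div_sq_sub_le_of_mul_separated {ι : Type*} (s : Finset ι) {j : ι} (hj : j ∉ s)
    {p r : ι → ℝ} {κ : ℝ} (hκ : 0 < κ) (hr : ∀ i, 0 < r i)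
    (hsep : Pairwise fun i k => κ * (r i + r k) ≤ |p i - p k|) :
    ∑ i ∈ s, r i / (p i - p j) ^ 2 ≤ 2 / (κ ^ 2 * r j) := by
  have hρ := sum_div_sq_sub_le_of_separated s hj (ρ := fun i => κ * r i)
    (fun i => mul_pos hκ (hr i)) fun i k hik => (mul_add κ _ _).symm.trans_le (hsep hik)
  simp only [mul_div_assoc, ← Finset.mul_sum] at hρ
  calc ∑ i ∈ s, r i / (p i - p j) ^ 2 ≤ κ⁻¹ * (2 / (κ * r j)) := by
        rwa [le_inv_mul_iff₀ hκ]
    _ = 2 / (κ ^ 2 * r j) := by field_simp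

theorem add_sub_le_dist_of_disjoint_ball {E : Type*} [NormedAddCommGroup E] [NormedSpace ℝ E]
    {x y z w : E} {a b R S : ℝ} (hR : 0 < R) (hS : 0 < S) (hz : z ∈ ball x a)
    (hw : w ∈ ball y b) (h : Disjoint (ball x R) (ball y S)) :
    R - a + (S - b) ≤ dist z w := by
  have hxy := (disjoint_ball_ball_iff hR hS).1 h
  have := dist_triangle4 x z w y
  rw [mem_ball, dist_comm] at hz
  rw [mem_ball] at hw
  linarith

theorem sub_add_le_setDist_ball_ball {x y : ℂ} {a b : ℝ} (ha : 0 < a) (hb : 0 < b) :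
    dist x y - (a + b) ≤ setDist (ball x a) (ball y b) := by
  refine le_csInf ((nonempty_ball.2 ha).image2 (nonempty_ball.2 hb)) ?_
  rintro _ ⟨z, hz, w, hw, rfl⟩
  have := dist_triangle4 x z w y
  rw [mem_ball, dist_comm] at hz
  rw [mem_ball] at hw
  linarith

theorem mul_dist_le_setDist_dilate {lam : ℝ} (hlam : 1 < lam) {x y z w : ℂ} {a b : ℝ}
    (ha : 0 < a) (hb : 0 < b) (hz : z ∈ ball x a) (hw : w ∈ ball y b)
    (h : Disjoint (ball x (lam * a)) (ball y (lam * b))) :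
    (lam - 1) / (2 * (lam + 1)) * dist z w ≤
      setDist (ball x ((1 + lam) / 2 * a)) (ball y ((1 + lam) / 2 * b)) := by
  have hxy := (disjoint_ball_ball_iff (by positivity) (by positivity)).1 h
  have hzw : dist z w ≤ dist x y + (a + b) := by
    have := dist_triangle4 z x y w
    rw [mem_ball] at hz hw
    rw [dist_comm y w] at this
    linarith
  have hQ := sub_add_le_setDist_ball_ball (x := x) (y := y)
    (show 0 < (1 + lam) / 2 * a by positivity) (show 0 < (1 + lam) / 2 * b by positivity)
  rw [div_mul_eq_mul_div, div_le_iff₀ (by linarith)]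
  -- the constant is chosen so that the bound is exact when `dist x y = lam * (a + b)`
  nlinarith [mul_nonneg (show (0 : ℝ) ≤ lam + 3 by linarith)
    (show 0 ≤ dist x y - lam * (a + b) by linarith)]

theorem div_setDist_sq_le {lam : ℝ} (hlam : 1 < lam) {x y z w : ℂ} {a b : ℝ}
    (ha : 0 < a) (hb : 0 < b) (hz : z ∈ ball x a) (hw : w ∈ ball y b)
    (h : Disjoint (ball x (lam * a)) (ball y (lam * b))) :
    a / setDist (ball x ((1 + lam) / 2 * a)) (ball y ((1 + lam) / 2 * b)) ^ 2 ≤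
      (2 * (lam + 1) / (lam - 1)) ^ 2 * (a / dist z w ^ 2) := by
  have hc : 0 < (lam - 1) / (2 * (lam + 1)) := div_pos (by linarith) (by linarith)
  have hzw : 0 < dist z w := by
    have := add_sub_le_dist_of_disjoint_ball (by positivity) (by positivity) hz hw h
    nlinarith
  calc _ ≤ a / ((lam - 1) / (2 * (lam + 1)) * dist z w) ^ 2 :=
        div_le_div_of_nonneg_left ha.le (by positivity)
          (pow_le_pow_left₀ (by positivity) (mul_dist_le_setDist_dilate hlam ha hb hz hw h) 2)
    _ = _ := by field_simp

/-- **The Marcinkiewicz-type estimate from the proof of Theorem 2.1 of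
Eiderman–Reznikov–Volberg.** Let `λ > 1`, `λ' = (1+λ)/2`, and let `D_i = D(x_i, r_i)` be
a finite or countable family of `λ`-separated discs each meeting the real line; set
`Q_i = λ'D_i`. Then there is `A₁ = A₁(λ)` with
`Σ_{i ≠ j} r_i / dist(Q_i, Q_j)² ≤ A₁ / r_j` for every `j`. -/
theorem marcinkiewicz_sum_bound (lam : ℝ) (hlam : 1 < lam) :
    ∃ A₁ : ℝ,
      ∀ (ι : Type) [Countable ι] (x : ι → ℂ) (r : ι → ℝ),
        (∀ i, 0 < r i) →
        (∀ i, (ball (x i) (r i) ∩ {z : ℂ | z.im = 0}).Nonempty) →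
        (Pairwise fun i k => Disjoint (ball (x i) (lam * r i)) (ball (x k) (lam * r k))) →
        ∀ (j : ι) (s : Finset ι), j ∉ s →
          ∑ i ∈ s, r i /
              (setDist (ball (x i) ((1 + lam) / 2 * r i))
                (ball (x j) ((1 + lam) / 2 * r j))) ^ 2 ≤ A₁ / r j := by
  have hlam₁ : 0 < lam - 1 := by linarith
  set K : ℝ := (2 * (lam + 1) / (lam - 1)) ^ 2
  refine ⟨2 * K / (lam - 1) ^ 2, fun ι _ x r hr hreal hdisj j s hjs => ?_⟩
  choose z hz using hreal
  set p : ι → ℝ := fun i => (z i).re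
  have hdist : ∀ i k, dist (z i) (z k) = |p i - p k| := fun i k => by
    rw [Complex.dist_of_im_eq ((hz i).2.trans (hz k).2.symm), Real.dist_eq]
  have hsep : Pairwise fun i k => (lam - 1) * (r i + r k) ≤ |p i - p k| := fun i k hik => by
    have := add_sub_le_dist_of_disjoint_ball (mul_pos (by linarith) (hr i))
      (mul_pos (by linarith) (hr k)) (hz i).1 (hz k).1 (hdisj hik)
    rw [hdist] at this
    linarith
  calc _ ≤ ∑ i ∈ s, K * (r i / (p i - p j) ^ 2) := Finset.sum_le_sum fun i hi => by
        simpa only [hdist, sq_abs] using div_setDist_sq_le hlam (hr i) (hr j) (hz i).1 (hz j).1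
          (hdisj (ne_of_mem_of_not_mem hi hjs))
    _ = K * ∑ i ∈ s, r i / (p i - p j) ^ 2 := (Finset.mul_sum _ _ _).symm
    _ ≤ K * (2 / ((lam - 1) ^ 2 * r j)) := by
        gcongr
        exact sum_div_sq_sub_le_of_mul_separated s hjs hlam₁ hr hsep
    _ = _ := by rw [div_div, ← mul_div_assoc, mul_comm K]
end

section
/- Let Γ ⊂ ℂ be a chord-arc curve with constant A₀ > 1, let λ > 1, and let D_j = D(x_j, r_j) be λ-separated discs with centers x_j ∈ Γ. Let μ_j be positive Borel measures with supp μ_j ⊂ D_j and with linear growth μ_j(D(y, s)) ≤ s for every disc D(y, s) ⊂ ℂ, and set μ = Σ_j μ_j. Then there exists a constant C = C(A₀, λ) such that μ(D(x, r)) ≤ C·r for every disc D(x, r) ⊂ ℂ. -/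
/-!
Split the discs meeting `D(y, s)` by size. A small disc (`r_j < s`) lies near `y`; pulling the
centres back to arc-length parameters turns the small discs into disjoint intervals
`(t_j - r_j, t_j + r_j)` inside one interval of length `≈ 8 A₀ s`, and `μ_j(D(y, s)) ≤ r_j`, so
their total contribution is `O(A₀ s)`. A large disc (`r_j ≥ s`) contains a point `p_j` of
`D(y, s)`, and the discs `D(p_j, (λ - 1) s) ⊆ λ D_j` are disjoint and lie in `D(y, λ s)`, so by
area there are at most `(λ / (λ - 1))²` of them, each contributing at most `s`.
-/

open MeasureTheory Metric Filter Set
open scoped ENNReal NNReal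

/-- `Γ ⊆ ℂ` is a chord-arc curve with constant `A₀`: it has an arc-length
parametrization `z` on an interval `[0, L]` (so `‖z t − z s‖ ≤ |t − s|`)
satisfying `|t − s| ≤ A₀·‖z t − z s‖`. -/
def IsChordArc (Γ : Set ℂ) (A₀ : ℝ) : Prop :=
  ∃ L : ℝ, 0 < L ∧ ∃ z : ℝ → ℂ,
    Γ = z '' Set.Icc 0 L ∧
    ∀ s ∈ Set.Icc (0:ℝ) L, ∀ t ∈ Set.Icc (0:ℝ) L,
      ‖z t - z s‖ ≤ |t - s| ∧ |t - s| ≤ A₀ * ‖z t - z s‖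

theorem IsChordArc.exists_param {Γ : Set ℂ} {A₀ : ℝ} (h : IsChordArc Γ A₀) :
    ∃ τ : ℂ → ℝ, ∀ a ∈ Γ, ∀ b ∈ Γ,
      dist a b ≤ dist (τ a) (τ b) ∧ dist (τ a) (τ b) ≤ A₀ * dist a b := by
  obtain ⟨L, -, z, rfl, hz⟩ := h
  refine ⟨Function.invFunOn z (Icc 0 L), ?_⟩
  rintro _ ⟨u, hu, rfl⟩ _ ⟨v, hv, rfl⟩
  obtain ⟨hu', hzu⟩ := Function.invFunOn_pos (f := z) ⟨u, hu, rfl⟩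
  obtain ⟨hv', hzv⟩ := Function.invFunOn_pos (f := z) ⟨v, hv, rfl⟩
  have := hz _ hv' _ hu'
  rw [hzu, hzv] at this
  simpa only [dist_eq_norm, Real.norm_eq_abs] using this

section Packing

variable {E : Type*} [NormedAddCommGroup E] [NormedSpace ℝ E] [MeasurableSpace E] [BorelSpace E]
  [FiniteDimensional ℝ E] {ι : Type*}

open Module

theorem sum_pow_finrank_le_of_pairwiseDisjoint_ball_subset {F : Finset ι} {p : ι → E}
    {ρ : ι → ℝ} {c : E} {R : ℝ} (hρ : ∀ j ∈ F, 0 < ρ j) (hR : 0 < R)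
    (hdisj : (F : Set ι).PairwiseDisjoint fun j => ball (p j) (ρ j))
    (hsub : ∀ j ∈ F, ball (p j) (ρ j) ⊆ ball c R) :
    ∑ j ∈ F, ρ j ^ finrank ℝ E ≤ R ^ finrank ℝ E := by
  set μ : Measure E := Measure.addHaar
  have hunit₀ : μ (ball 0 1) ≠ 0 := (measure_ball_pos μ 0 one_pos).ne'
  have hunit : μ (ball 0 1) ≠ ∞ := measure_ball_lt_top.ne
  have hvol : ∑ j ∈ F, μ (ball (p j) (ρ j)) ≤ μ (ball c R) := by
    rw [← measure_biUnion_finset hdisj fun _ _ => measurableSet_ball]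
    exact measure_mono (iUnion₂_subset hsub)
  rw [Finset.sum_congr rfl fun j hj => μ.addHaar_ball_of_pos (p j) (hρ j hj),
    ← Finset.sum_mul, μ.addHaar_ball_of_pos c hR, ENNReal.mul_le_mul_iff_left hunit₀ hunit,
    ← ENNReal.ofReal_sum_of_nonneg fun j hj => pow_nonneg (hρ j hj).le _,
    ENNReal.ofReal_le_ofReal_iff (by positivity)] at hvol
  exact hvol

theorem card_le_of_large_of_meet_ball {x : ι → E} {r : ι → ℝ} {lam : ℝ} {y : E} {s : ℝ}
    (hlam : 1 < lam) (hs : 0 < s)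
    (hsep : Pairwise fun j k => Disjoint (ball (x j) (lam * r j)) (ball (x k) (lam * r k)))
    {F : Finset ι} (hF : ∀ j ∈ F, s ≤ r j ∧ (ball (x j) (r j) ∩ ball y s).Nonempty) :
    (F.card : ℝ) ≤ (lam / (lam - 1)) ^ finrank ℝ E := by
  choose! p hpx hpy using fun j hj => (hF j hj).2
  have hρ : 0 < (lam - 1) * s := mul_pos (by linarith) hs
  have hsub_sep : ∀ j ∈ F, ball (p j) ((lam - 1) * s) ⊆ ball (x j) (lam * r j) := by
    intro j hj
    refine ball_subset_ball' ?_
    have := mem_ball.mp (hpx j hj)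
    nlinarith [(hF j hj).1]
  have hsub : ∀ j ∈ F, ball (p j) ((lam - 1) * s) ⊆ ball y (lam * s) := by
    intro j hj
    refine ball_subset_ball' ?_
    have := mem_ball.mp (hpy j hj)
    nlinarith
  have hpack := sum_pow_finrank_le_of_pairwiseDisjoint_ball_subset (fun _ _ => hρ)
    (by positivity) (fun j hj k hk hjk => (hsep hjk).mono (hsub_sep j hj) (hsub_sep k hk)) hsub
  rw [Finset.sum_const, nsmul_eq_mul, mul_pow, mul_pow] at hpack
  rw [div_pow, le_div_iff₀ (by have := sub_pos.mpr hlam; positivity)]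
  exact le_of_mul_le_mul_right (by linarith) (pow_pos hs _)

end Packing

theorem sum_radii_le_of_small_of_meet_ball {X ι : Type*} [PseudoMetricSpace X] {x : ι → X}
    {t r : ι → ℝ} {A : ℝ} {y : X} {s : ℝ} (hA : 0 ≤ A) (hs : 0 < s)
    (hsep : Pairwise fun j k => r j + r k ≤ dist (t j) (t k))
    (hlip : ∀ j k, dist (t j) (t k) ≤ A * dist (x j) (x k))
    {F : Finset ι} (hr : ∀ j ∈ F, 0 < r j)
    (hF : ∀ j ∈ F, r j < s ∧ (ball (x j) (r j) ∩ ball y s).Nonempty) :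
    ∑ j ∈ F, r j ≤ (4 * A + 1) * s := by
  obtain rfl | ⟨j₀, hj₀⟩ := F.eq_empty_or_nonempty
  · simp only [Finset.sum_empty]
    positivity
  have hnear : ∀ j ∈ F, dist (x j) y < 2 * s := by
    intro j hj
    obtain ⟨hrs, w, hwx, hwy⟩ := hF j hj
    linarith [dist_triangle_left (x j) y w, mem_ball.mp hwx, mem_ball.mp hwy]
  have hsub : ∀ j ∈ F, ball (t j) (r j) ⊆ ball (t j₀) ((4 * A + 1) * s) := by
    intro j hj
    refine ball_subset_ball' ?_
    have hx : dist (x j) (x j₀) ≤ 4 * s := by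
      linarith [dist_triangle_right (x j) (x j₀) y, hnear j hj, hnear j₀ hj₀]
    nlinarith [hlip j j₀, (hF j hj).1]
  have hpack := sum_pow_finrank_le_of_pairwiseDisjoint_ball_subset hr (by positivity)
    (fun j _ k _ hjk => ball_disjoint_ball (hsep hjk)) hsub
  simpa only [Module.finrank_self, pow_one] using hpack

theorem sum_measure_ball_le_of_separated {ι : Type*} {x : ι → ℂ} {t r : ι → ℝ} {A lam : ℝ}
    {μ : ι → Measure ℂ} (hA : 0 ≤ A) (hlam : 1 < lam) (hr : ∀ j, 0 < r j)
    (hxt : ∀ j k, dist (x j) (x k) ≤ dist (t j) (t k))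
    (hlip : ∀ j k, dist (t j) (t k) ≤ A * dist (x j) (x k))
    (hsep : Pairwise fun j k => Disjoint (ball (x j) (lam * r j)) (ball (x k) (lam * r k)))
    (hsupp : ∀ j, μ j (ball (x j) (r j))ᶜ = 0)
    (hgrow : ∀ j (y : ℂ) (s : ℝ), 0 < s → μ j (ball y s) ≤ ENNReal.ofReal s)
    {y : ℂ} {s : ℝ} (hs : 0 < s) (F : Finset ι) :
    ∑ j ∈ F, μ j (ball y s) ≤ ENNReal.ofReal ((4 * A + 1 + (lam / (lam - 1)) ^ 2) * s) := by
  classical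
  have hsep_t : Pairwise fun j k => r j + r k ≤ dist (t j) (t k) := by
    intro j k hjk
    have hlam₀ : 0 < lam := by linarith
    have := (disjoint_ball_ball_iff (mul_pos hlam₀ (hr j)) (mul_pos hlam₀ (hr k))).mp (hsep hjk)
    nlinarith [hxt j k, hr j, hr k]
  have hle_radius : ∀ j, μ j (ball y s) ≤ ENNReal.ofReal (r j) := fun j =>
    calc μ j (ball y s) = μ j (ball y s ∩ ball (x j) (r j)) :=
          (measure_inter_conull (hsupp j)).symm
      _ ≤ μ j (ball (x j) (r j)) := measure_mono inter_subset_right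
      _ ≤ ENNReal.ofReal (r j) := hgrow j _ _ (hr j)
  set meets : ι → Prop := fun j => (ball (x j) (r j) ∩ ball y s).Nonempty
  have hmeets : ∀ j ∈ F, μ j (ball y s) ≠ 0 → meets j := fun j _ hj => by
    by_contra hdisj
    exact hj (measure_mono_null (fun w hwy hwx => hdisj ⟨w, hwx, hwy⟩) (hsupp j))
  rw [← Finset.sum_filter_of_ne hmeets, ← Finset.sum_filter_add_sum_filter_not _ (r · < s),
    add_mul, ENNReal.ofReal_add (by positivity) (by positivity)]
  set small := (F.filter meets).filter (r · < s)
  set large := (F.filter meets).filter (¬ r · < s)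
  gcongr ?_ + ?_
  · have hsum := sum_radii_le_of_small_of_meet_ball (F := small) (y := y) hA hs hsep_t hlip
      (fun j _ => hr j) fun j hj => by
        simp only [small, Finset.mem_filter] at hj
        exact ⟨hj.2, hj.1.2⟩
    calc ∑ j ∈ small, μ j (ball y s) ≤ ∑ j ∈ small, ENNReal.ofReal (r j) :=
          Finset.sum_le_sum fun j _ => hle_radius j
      _ = ENNReal.ofReal (∑ j ∈ small, r j) :=
          (ENNReal.ofReal_sum_of_nonneg fun j _ => (hr j).le).symm
      _ ≤ ENNReal.ofReal ((4 * A + 1) * s) := ENNReal.ofReal_le_ofReal hsum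
  · have hcard := card_le_of_large_of_meet_ball (F := large) hlam hs hsep fun j hj => by
      simp only [large, Finset.mem_filter, not_lt] at hj
      exact ⟨hj.2, hj.1.2⟩
    rw [Complex.finrank_real_complex] at hcard
    calc ∑ j ∈ large, μ j (ball y s) ≤ ∑ _j ∈ large, ENNReal.ofReal s :=
          Finset.sum_le_sum fun j _ => hgrow j y s hs
      _ = ENNReal.ofReal (large.card * s) := by
          rw [Finset.sum_const, nsmul_eq_mul, ENNReal.ofReal_mul (Nat.cast_nonneg _),
            ENNReal.ofReal_natCast]
      _ ≤ ENNReal.ofReal ((lam / (lam - 1)) ^ 2 * s) := by gcongr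

/-- **Linear growth of the sum of measures on separated discs along a chord-arc curve**
(from the proof of Theorem 1.1 of Eiderman–Reznikov–Volberg). Let `Γ` be a chord-arc
curve with constant `A₀ > 1` and `D_j = D(x_j, r_j)` be `λ`-separated discs (`λ > 1`)
with centers on `Γ`. If `μ_j` are positive measures with `supp μ_j ⊆ D_j` and linear
growth `μ_j(D(y, s)) ≤ s`, then `μ = Σ μ_j` satisfies `μ(D(x, r)) ≤ C(A₀, λ)·r` for
every disc `D(x, r)`. -/
theorem sum_measure_linear_growth (A₀ lam : ℝ) (hA₀ : 1 < A₀) (hlam : 1 < lam) :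
    ∃ C : ℝ,
      ∀ (Γ : Set ℂ), IsChordArc Γ A₀ →
      ∀ (ι : Type) [Countable ι] (x : ι → ℂ) (r : ι → ℝ) (μ : ι → Measure ℂ),
        (∀ j, 0 < r j) →
        (∀ j, x j ∈ Γ) →
        (Pairwise fun j k => Disjoint (ball (x j) (lam * r j)) (ball (x k) (lam * r k))) →
        (∀ j, (μ j) (ball (x j) (r j))ᶜ = 0) →
        (∀ j (y : ℂ) (s : ℝ), 0 < s → (μ j) (ball y s) ≤ ENNReal.ofReal s) →
        ∀ (y : ℂ) (s : ℝ), 0 < s → (Measure.sum μ) (ball y s) ≤ ENNReal.ofReal (C * s) := by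
  refine ⟨4 * A₀ + 1 + (lam / (lam - 1)) ^ 2, ?_⟩
  intro Γ hΓ ι _ x r μ hr hxΓ hsep hsupp hgrow y s hs
  obtain ⟨τ, hτ⟩ := hΓ.exists_param
  rw [Measure.sum_apply _ measurableSet_ball, ENNReal.tsum_eq_iSup_sum]
  exact iSup_le <| sum_measure_ball_le_of_separated (by linarith) hlam hr
    (fun j k => (hτ _ (hxΓ j) _ (hxΓ k)).1) (fun j k => (hτ _ (hxΓ j) _ (hxΓ k)).2)
    hsep hsupp hgrow hs
end
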